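/- Let R = 4, B = {0,2}, L = {0,3,b} with b ≡ 3 (mod 4), and suppose the digit set {0,3} has the unique extreme cycle {−1}. If M is a nontrivial min-set for L, then every point x₀ ∈ M can be written x₀ = −4ⁿ + 4^{n−1} l_{n−1} + ⋯ + 4 l₁ + l₀ for some n ≥ 0 and l₀,…,l_{n−1} ∈ {0,3}, and there is at most one nontrivial min-set for L. -/

import Mathlib

open Complex

/-- `m_B(x) = (1 + e^{2πi·2x})/2` for `R = 4`, `B = {0,2}`. -/
noncomputable def mB (x : ℝ) : ℂ :=
  (1 + Complex.exp (2 * Real.pi * Complex.I * (2 * x))) / 2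

/-- The transition maps `g_l(t) = (t - l)/4`. -/
noncomputable def g (l : ℤ) (t : ℝ) : ℝ := (t - (l : ℝ)) / 4

/-- A set `M` is invariant for the digit set `L`: possible transitions stay in `M`. -/
def IsInvSet (L : Finset ℤ) (M : Set ℝ) : Prop :=
  ∀ t ∈ M, ∀ l ∈ L, mB (g l t) ≠ 0 → g l t ∈ M

/-- A min-set: a nonempty finite invariant set which is minimal among such sets. -/
def IsMinSet (L : Finset ℤ) (M : Set ℝ) : Prop :=
  M.Finite ∧ M.Nonempty ∧ IsInvSet L M ∧
    ∀ M' ⊆ M, M'.Nonempty → IsInvSet L M' → M' = M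

/-!
Points of a finite invariant set are integers: otherwise `t, t/4, t/16, …` would all lie in it.
An integer point `m` is `≡ 0` or `3 (mod 4)`, since otherwise the admissible transition by `3`
or by `0` leaves `ℤ`; hence the set is closed under `m ↦ m / 4` (floor division), the transition
by the digit `m % 4`. Following this map from any point one reaches a periodic orbit, which is an
extreme cycle of `{0, 3}`, so it is `{0}` or `{-1}`; it cannot be `{0}`, because a min-set
containing `0` is `{0}`. Reading off the digits along the way to `-1` gives the expansion, and two
nontrivial min-sets share the point `-1`, so they coincide.
-/

open Function Set

lemma mB_eq_zero_iff (x : ℝ) : mB x = 0 ↔ ∃ k : ℤ, Odd k ∧ 4 * x = k := by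
  unfold mB
  rw [div_eq_zero_iff]
  simp only [two_ne_zero, or_false]
  have hpi : (Real.pi : ℂ) * I ≠ 0 := mul_ne_zero (by exact_mod_cast Real.pi_ne_zero) I_ne_zero
  constructor
  · intro h
    have h' : exp (2 * Real.pi * I * (2 * x)) = exp (Real.pi * I) := by
      rw [exp_pi_mul_I]
      linear_combination h
    obtain ⟨n, hn⟩ := exp_eq_exp_iff_exists_int.1 h'
    refine ⟨1 + 2 * n, ⟨n, by ring⟩, ?_⟩
    have h4 : ((4 * x : ℝ) : ℂ) = (((1 + 2 * n : ℤ) : ℝ) : ℂ) := by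
      push_cast
      exact mul_left_cancel₀ hpi (by linear_combination hn)
    exact_mod_cast h4
  · rintro ⟨k, ⟨n, rfl⟩, hx⟩
    have hxc : (4 : ℂ) * x = 2 * n + 1 := by exact_mod_cast hx
    have harg : (2 : ℂ) * Real.pi * I * (2 * x) = Real.pi * I + n * (2 * Real.pi * I) := by
      linear_combination (Real.pi : ℂ) * I * hxc
    rw [harg, exp_add, exp_pi_mul_I, exp_int_mul_two_pi_mul_I]
    ring

lemma mB_intCast (m : ℤ) : mB m = 1 := by
  have : (2 : ℂ) * Real.pi * I * (2 * (m : ℝ)) = ((2 * m : ℤ) : ℂ) * (2 * Real.pi * I) := by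
    push_cast
    ring
  rw [mB, this, exp_int_mul_two_pi_mul_I]
  norm_num

lemma mB_g_eq_zero_iff (l : ℤ) (t : ℝ) : mB (g l t) = 0 ↔ ∃ k : ℤ, Odd k ∧ t - l = k := by
  simp only [mB_eq_zero_iff, g, mul_div_cancel₀ _ (four_ne_zero : (4 : ℝ) ≠ 0)]

lemma g_intCast_eq_intCast_iff {l m w : ℤ} : g l m = w ↔ m - l = 4 * w := by
  rw [g, div_eq_iff four_ne_zero, mul_comm]
  norm_cast

lemma mB_g_intCast_ne_zero {l m : ℤ} (h : Even (m - l)) : mB (g l m) ≠ 0 := by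
  rw [Ne, mB_g_eq_zero_iff]
  rintro ⟨k, hk, hmk⟩
  have : m - l = k := by exact_mod_cast hmk
  exact Int.not_even_iff_odd.2 hk (this ▸ h)

def divFour (z : ℤ) : ℤ := z / 4

lemma eq_pow_mul_iterate_divFour_add_sum (m : ℤ) (n : ℕ) :
    m = 4 ^ n * divFour^[n] m + ∑ i ∈ Finset.range n, 4 ^ i * (divFour^[i] m % 4) := by
  induction n with
  | zero => simp
  | succ n ih =>
    rw [Finset.sum_range_succ, iterate_succ_apply', divFour]
    linear_combination ih - 4 ^ n * Int.mul_ediv_add_emod (divFour^[n] m) 4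

namespace IsInvSet

variable {L : Finset ℤ} {M : Set ℝ}

lemma subset_range_intCast (hM : IsInvSet L M) (h0 : (0 : ℤ) ∈ L) (hfin : M.Finite) :
    M ⊆ range ((↑) : ℤ → ℝ) := by
  intro t ht
  by_contra hZ
  have hmem : ∀ n : ℕ, t / 4 ^ n ∈ M ∧ t / 4 ^ n ∉ range ((↑) : ℤ → ℝ) := by
    intro n
    induction n with
    | zero => simpa using And.intro ht hZ
    | succ n ih =>
      have hg : g 0 (t / 4 ^ n) = t / 4 ^ (n + 1) := by
        rw [g, pow_succ]
        push_cast
        ring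
      refine ⟨hg ▸ hM _ ih.1 0 h0 ?_, ?_⟩
      · rw [Ne, mB_g_eq_zero_iff]
        rintro ⟨k, -, hk⟩
        exact ih.2 ⟨k, by simpa using hk.symm⟩
      · rintro ⟨w, hw⟩
        refine ih.2 ⟨4 * w, ?_⟩
        rw [pow_succ] at hw
        push_cast
        rw [hw]
        field_simp
  have ht0 : t ≠ 0 := fun h => hZ ⟨0, by simp [h]⟩
  have hinj : Injective fun n : ℕ => t / 4 ^ n := fun a b hab =>
    Nat.pow_right_injective (by norm_num : 2 ≤ 4)
      (by exact_mod_cast inv_inj.1 (mul_left_cancel₀ ht0 hab))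
  exact hfin.not_infinite (infinite_of_injective_forall_mem hinj fun n => (hmem n).1)

lemma four_dvd_sub (hM : IsInvSet L M) (hZ : M ⊆ range ((↑) : ℤ → ℝ)) {l m : ℤ} (hl : l ∈ L)
    (hm : (m : ℝ) ∈ M) (h : Even (m - l)) : 4 ∣ m - l := by
  obtain ⟨w, hw⟩ := hZ (hM _ hm l hl (mB_g_intCast_ne_zero h))
  exact ⟨w, g_intCast_eq_intCast_iff.1 hw.symm⟩

lemma emod_four_eq (hM : IsInvSet L M) (hZ : M ⊆ range ((↑) : ℤ → ℝ)) (h0 : (0 : ℤ) ∈ L)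
    (h3 : (3 : ℤ) ∈ L) {m : ℤ} (hm : (m : ℝ) ∈ M) : m % 4 = 0 ∨ m % 4 = 3 := by
  have h0' := fun h => hM.four_dvd_sub hZ h0 hm h
  have h3' := fun h => hM.four_dvd_sub hZ h3 hm h
  rw [Int.even_iff] at h0' h3'
  omega

lemma mapsTo_divFour (hM : IsInvSet L M) (hZ : M ⊆ range ((↑) : ℤ → ℝ)) (h0 : (0 : ℤ) ∈ L)
    (h3 : (3 : ℤ) ∈ L) : MapsTo divFour (((↑) : ℤ → ℝ) ⁻¹' M) (((↑) : ℤ → ℝ) ⁻¹' M) := by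
  intro m hm
  have hl : m % 4 ∈ L := by
    rcases hM.emod_four_eq hZ h0 h3 hm with h | h <;> rwa [h]
  have := hM _ hm _ hl (mB_g_intCast_ne_zero (Int.even_iff.2 (by omega)))
  rwa [g_intCast_eq_intCast_iff.2 (by omega : m - m % 4 = 4 * (m / 4))] at this

end IsInvSet

namespace Function

variable {α : Type*} {f : α → α}

lemma exists_isPeriodicPt_iterate_of_mapsTo {S : Set α} (hS : S.Finite) (hf : MapsTo f S S)
    {x : α} (hx : x ∈ S) : ∃ i d : ℕ, 0 < d ∧ IsPeriodicPt f d (f^[i] x) := by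
  obtain ⟨i, j, hij, he⟩ := hS.exists_lt_map_eq_of_forall_mem (fun k => hf.iterate k hx)
  refine ⟨i, j - i, Nat.sub_pos_of_lt hij, ?_⟩
  rw [IsPeriodicPt, IsFixedPt, ← iterate_add_apply, Nat.sub_add_cancel hij.le]
  exact he.symm

variable {x : α} {n : ℕ}

lemma IsPeriodicPt.finite_range_iterate (hx : IsPeriodicPt f n x) (hn : 0 < n) :
    (range (f^[·] x)).Finite := by
  refine ((finite_Iio n).image (f^[·] x)).subset ?_
  rintro _ ⟨k, rfl⟩
  exact ⟨k % n, Nat.mod_lt k hn, hx.iterate_mod_apply k⟩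

lemma IsPeriodicPt.eq_range_iterate_of_mapsTo (hx : IsPeriodicPt f n x) (hn : 0 < n) {S : Set α}
    (hS : S ⊆ range (f^[·] x)) (hne : S.Nonempty) (hf : MapsTo f S S) :
    S = range (f^[·] x) := by
  obtain ⟨_, hy⟩ := hne
  obtain ⟨k₀, rfl⟩ := hS hy
  refine hS.antisymm ?_
  rintro _ ⟨k, rfl⟩
  have hk : k₀ ≤ k + n * k₀ := le_add_left (Nat.le_mul_of_pos_left k₀ hn)
  have : f^[k] x = f^[k + n * k₀ - k₀] (f^[k₀] x) := by
    rw [← iterate_add_apply, Nat.sub_add_cancel hk, ← hx.iterate_mod_apply (k + n * k₀),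
      Nat.add_mul_mod_self_left, hx.iterate_mod_apply]
  simp only [this]
  exact hf.iterate _ hy

end Function

namespace IsMinSet

variable {L : Finset ℤ} {M M' : Set ℝ}

lemma isInvSet (hM : IsMinSet L M) : IsInvSet L M := hM.2.2.1

lemma subset_range_intCast (hM : IsMinSet L M) (h0 : (0 : ℤ) ∈ L) : M ⊆ range ((↑) : ℤ → ℝ) :=
  hM.isInvSet.subset_range_intCast h0 hM.1

lemma eq_of_mem_of_mem (hM : IsMinSet L M) (hM' : IsMinSet L M') {x : ℝ} (hx : x ∈ M)
    (hx' : x ∈ M') : M = M' := by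
  have hinv : IsInvSet L (M ∩ M') :=
    fun t ht l hl h => ⟨hM.isInvSet t ht.1 l hl h, hM'.isInvSet t ht.2 l hl h⟩
  rw [← hM.2.2.2 _ inter_subset_left ⟨x, hx, hx'⟩ hinv,
    hM'.2.2.2 _ inter_subset_right ⟨x, hx, hx'⟩ hinv]

lemma eq_singleton_zero (hM : IsMinSet L M) (hL : ∀ l ∈ L, l = 0 ∨ Odd l) (h0 : (0 : ℝ) ∈ M) :
    M = {0} := by
  refine (hM.2.2.2 {0} (singleton_subset_iff.2 h0) (singleton_nonempty 0) ?_).symm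
  rintro _ rfl l hl hne
  rcases hL l hl with rfl | hodd
  · simp [g]
  · exact absurd ((mB_g_eq_zero_iff l 0).2 ⟨-l, hodd.neg, by simp⟩) hne

end IsMinSet

/-- The paper's hypothesis that `{0, 3}` has the unique nontrivial extreme cycle `{-1}`: an extreme
cycle is a finite set of points with `‖m_B‖ = 1`, minimal among the nonempty sets in which every
point has a transition by a digit `0` or `3`. -/
def ExtremeCyclesAreZeroOrNegOne : Prop :=
  ∀ C : Set ℝ, C.Finite → C.Nonempty →
    (∀ t ∈ C, ‖mB t‖ = 1) →
    (∀ t ∈ C, ∃ l ∈ ({0, 3} : Finset ℤ), (t - (l : ℝ)) / 4 ∈ C) →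
    (∀ C' ⊆ C, C'.Nonempty →
      (∀ t ∈ C', ∃ l ∈ ({0, 3} : Finset ℤ), (t - (l : ℝ)) / 4 ∈ C') → C' = C) →
    C = {0} ∨ C = {-1}

lemma divFour_eq_of_g_eq {l z w : ℤ} (hl : l ∈ ({0, 3} : Finset ℤ)) (h : g l z = w) :
    divFour z = w := by
  rw [g_intCast_eq_intCast_iff] at h
  simp only [Finset.mem_insert, Finset.mem_singleton] at hl
  rw [divFour]
  omega

lemma eq_zero_or_neg_one_of_isPeriodicPt (hcyc : ExtremeCyclesAreZeroOrNegOne) {p : ℤ} {d : ℕ}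
    (hd : 0 < d) (hp : IsPeriodicPt divFour d p)
    (hres : ∀ k, divFour^[k] p % 4 = 0 ∨ divFour^[k] p % 4 = 3) : p = 0 ∨ p = -1 := by
  set O := range (divFour^[·] p)
  have hstep : ∀ z ∈ O, z % 4 ∈ ({0, 3} : Finset ℤ) ∧ g (z % 4) z ∈ ((↑) : ℤ → ℝ) '' O := by
    rintro _ ⟨k, rfl⟩
    refine ⟨by rcases hres k with h | h <;> simp [h], divFour^[k + 1] p, ⟨k + 1, rfl⟩, ?_⟩
    dsimp only
    rw [iterate_succ_apply', eq_comm, g_intCast_eq_intCast_iff, divFour]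
    omega
  have hmin : ∀ C' ⊆ ((↑) : ℤ → ℝ) '' O, C'.Nonempty →
      (∀ t ∈ C', ∃ l ∈ ({0, 3} : Finset ℤ), (t - (l : ℝ)) / 4 ∈ C') → C' = (↑) '' O := by
    intro C' hC' hne hclosed
    have hC'Z : C' ⊆ range ((↑) : ℤ → ℝ) := hC'.trans (image_subset_range _ _)
    have hsub : ((↑) : ℤ → ℝ) ⁻¹' C' ⊆ O := fun z hz => by
      obtain ⟨z', hz', he⟩ := hC' hz
      exact Int.cast_injective he ▸ hz'
    have hmaps : MapsTo divFour (((↑) : ℤ → ℝ) ⁻¹' C') (((↑) : ℤ → ℝ) ⁻¹' C') := by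
      intro z hz
      obtain ⟨l, hl, hlz⟩ := hclosed _ hz
      obtain ⟨w, hw⟩ := hC'Z hlz
      rwa [mem_preimage, divFour_eq_of_g_eq hl hw.symm, hw]
    have hne' : (((↑) : ℤ → ℝ) ⁻¹' C').Nonempty := by
      obtain ⟨_, ht⟩ := hne
      obtain ⟨z, rfl⟩ := hC'Z ht
      exact ⟨z, ht⟩
    rw [← image_preimage_eq_of_subset hC'Z, hp.eq_range_iterate_of_mapsTo hd hsub hne' hmaps]
  have hp_mem : (p : ℝ) ∈ ((↑) : ℤ → ℝ) '' O := ⟨p, ⟨0, rfl⟩, rfl⟩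
  rcases hcyc _ ((hp.finite_range_iterate hd).image _) ((range_nonempty _).image _)
    (by rintro _ ⟨z, -, rfl⟩; simp [mB_intCast])
    (by rintro _ ⟨z, hz, rfl⟩; exact ⟨z % 4, hstep z hz⟩)
    hmin with h | h <;> rw [h, mem_singleton_iff] at hp_mem
  · exact Or.inl (by exact_mod_cast hp_mem)
  · exact Or.inr (by exact_mod_cast hp_mem)

lemma IsMinSet.exists_iterate_divFour_eq_neg_one (hcyc : ExtremeCyclesAreZeroOrNegOne)
    {L : Finset ℤ} (h0 : (0 : ℤ) ∈ L) (h3 : (3 : ℤ) ∈ L) (hL : ∀ l ∈ L, l = 0 ∨ Odd l)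
    {M : Set ℝ} (hM : IsMinSet L M) (hnt : M ≠ {0}) {m : ℤ} (hm : (m : ℝ) ∈ M) :
    ∃ n, divFour^[n] m = -1 := by
  have hZ := hM.subset_range_intCast h0
  have hmaps := hM.isInvSet.mapsTo_divFour hZ h0 h3
  obtain ⟨i, d, hd, hp⟩ :=
    exists_isPeriodicPt_iterate_of_mapsTo (hM.1.preimage Int.cast_injective.injOn) hmaps hm
  have hpM := hmaps.iterate i hm
  have hres k := hM.isInvSet.emod_four_eq hZ h0 h3 (hmaps.iterate k hpM)
  rcases eq_zero_or_neg_one_of_isPeriodicPt hcyc hd hp hres with h | h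
  · exact absurd (hM.eq_singleton_zero hL (by simpa [h] using hpM)) hnt
  · exact ⟨i, h⟩

lemma IsMinSet.neg_one_mem (hcyc : ExtremeCyclesAreZeroOrNegOne) {L : Finset ℤ}
    (h0 : (0 : ℤ) ∈ L) (h3 : (3 : ℤ) ∈ L) (hL : ∀ l ∈ L, l = 0 ∨ Odd l) {M : Set ℝ}
    (hM : IsMinSet L M) (hnt : M ≠ {0}) : (-1 : ℝ) ∈ M := by
  have hZ := hM.subset_range_intCast h0
  obtain ⟨_, hx⟩ := hM.2.1
  obtain ⟨m, rfl⟩ := hZ hx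
  obtain ⟨n, hn⟩ := hM.exists_iterate_divFour_eq_neg_one hcyc h0 h3 hL hnt hx
  simpa [hn] using (hM.isInvSet.mapsTo_divFour hZ h0 h3).iterate n hx

lemma IsMinSet.exists_digit_expansion (hcyc : ExtremeCyclesAreZeroOrNegOne) {L : Finset ℤ}
    (h0 : (0 : ℤ) ∈ L) (h3 : (3 : ℤ) ∈ L) (hL : ∀ l ∈ L, l = 0 ∨ Odd l) {M : Set ℝ}
    (hM : IsMinSet L M) (hnt : M ≠ {0}) {x : ℝ} (hx : x ∈ M) :
    ∃ (n : ℕ) (lw : ℕ → ℤ), (∀ i < n, lw i = 0 ∨ lw i = 3) ∧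
      x = -(4 : ℝ) ^ n + ∑ i ∈ Finset.range n, (4 : ℝ) ^ i * (lw i : ℝ) := by
  have hZ := hM.subset_range_intCast h0
  obtain ⟨m, rfl⟩ := hZ hx
  obtain ⟨n, hn⟩ := hM.exists_iterate_divFour_eq_neg_one hcyc h0 h3 hL hnt hx
  refine ⟨n, fun i => divFour^[i] m % 4, fun i _ =>
    hM.isInvSet.emod_four_eq hZ h0 h3 ((hM.isInvSet.mapsTo_divFour hZ h0 h3).iterate i hx), ?_⟩
  have := congrArg ((↑) : ℤ → ℝ) (eq_pow_mul_iterate_divFour_add_sum m n)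
  rw [hn] at this
  push_cast at this
  linarith

/-- for `L = {0,3,b}` with `b ≡ 3 (mod 4)`, assuming the digit set `{0,3}`
has the unique (nontrivial) extreme cycle `{-1}`, every point of a nontrivial min-set `M`
has the form `-4^n + 4^{n-1} l_{n-1} + ⋯ + 4 l₁ + l₀` with digits `lᵢ ∈ {0,3}`, and there
is at most one nontrivial min-set. -/
theorem stmt18 (b : ℤ) (hb : b % 4 = 3)
    (hunique : ∀ C : Set ℝ, C.Finite → C.Nonempty →
      (∀ t ∈ C, ‖mB t‖ = 1) →
      (∀ t ∈ C, ∃ l ∈ ({0, 3} : Finset ℤ), (t - (l : ℝ)) / 4 ∈ C) →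
      (∀ C' ⊆ C, C'.Nonempty →
        (∀ t ∈ C', ∃ l ∈ ({0, 3} : Finset ℤ), (t - (l : ℝ)) / 4 ∈ C') → C' = C) →
      C = {0} ∨ C = {-1})
    (M : Set ℝ) (hM : IsMinSet ({0, 3, b} : Finset ℤ) M) (hnt : M ≠ {0}) :
    (∀ x ∈ M, ∃ (n : ℕ) (lw : ℕ → ℤ), (∀ i < n, lw i = 0 ∨ lw i = 3) ∧
      x = -(4 : ℝ) ^ n + ∑ i ∈ Finset.range n, (4 : ℝ) ^ i * (lw i : ℝ)) ∧
    (∀ M' : Set ℝ, IsMinSet ({0, 3, b} : Finset ℤ) M' → M' ≠ {0} → M' = M) := by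
  have h0 : (0 : ℤ) ∈ ({0, 3, b} : Finset ℤ) := by simp
  have h3 : (3 : ℤ) ∈ ({0, 3, b} : Finset ℤ) := by simp
  have hL : ∀ l ∈ ({0, 3, b} : Finset ℤ), l = 0 ∨ Odd l := by
    simp only [Finset.mem_insert, Finset.mem_singleton, Int.odd_iff]
    omega
  refine ⟨fun x hx => hM.exists_digit_expansion hunique h0 h3 hL hnt hx, fun M' hM' hnt' => ?_⟩
  exact hM'.eq_of_mem_of_mem hM (hM'.neg_one_mem hunique h0 h3 hL hnt')
    (hM.neg_one_mem hunique h0 h3 hL hnt)
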